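/- arXiv:1912.12001 — 6 statements merged into one kernel-verified Lean document; each statement's English description precedes it below -/
import Mathlib

section
/- Let α, τ, η, β be real numbers with α ∈ (0,2), α ≠ 1, τ > 0, η > 0, β > 0, and suppose Condition 1 holds: τ < α and β ≥ max( (α−1)/(τ − τ^α·(τ + log(1+η))^(1−α)), α/τ + 1/η ). Then f(x) ≤ f(1) for all real x ≥ 1. -/
/-!
Substitute `u = (x - 1)ηβ + 1` and `m = ηβ - 1`, so that `x = (u + m)/(ηβ)` and `f` becomes an
increasing affine function of `F(u) = (u + m) φ(τ + log(1 + η/u))`, where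
`φ(g) = (g^(1-α) - τ^(1-α))/(1-α)`; it suffices to show `F(u) ≤ F(1)` for `u ≥ 1`.

`F` is convex on `u > 0`: with `G = τ + log(1 + η/u)`, `F''` factors so that its sign is that of
`G (u(2m - η) + mη) - αη(u + m)`, which is nonnegative by the Padé bound
`log(1 + z) ≥ 2z/(2 + z)` as soon as `τ ≤ α ≤ 2` and `αη ≤ τm` (that is, `β ≥ α/τ + 1/η`).
`F` is bounded above on `[1, ∞)`, since concavity of `φ` gives `φ(G) ≤ (G - τ) τ^(-α) ≤ η τ^(-α)/u`.
Finally, a convex function bounded above on a ray `[a, ∞)` is maximal at `a`.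
-/

open Real Filter

/-- The function `f` from the paper (Eq. (33)):
`f(x) = x·(τ + log(1 + η/((x−1)ηβ + 1)))^(1−α)/(1−α) − (x−1)·τ^(1−α)/(1−α)`. -/
noncomputable def f (α τ η β : ℝ) : ℝ → ℝ := fun x =>
  x * (τ + Real.log (1 + η / ((x - 1) * η * β + 1))) ^ (1 - α) / (1 - α)
    - (x - 1) * τ ^ (1 - α) / (1 - α)

open Set

theorem rpow_sub_one_div_le_sub_one {p t : ℝ} (ht : 0 < t) (hp0 : p ≠ 0) (hp1 : p ≤ 1) :
    (t ^ p - 1) / p ≤ t - 1 := by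
  rcases hp0.lt_or_gt with hp | hp
  · -- Bernoulli with exponent `1 - p ≥ 1` at the point `t⁻¹`, multiplied by `t`.
    have hB : 1 + p * (t - 1) ≤ t ^ p :=
      calc 1 + p * (t - 1) = t * (1 + (1 - p) * (t⁻¹ - 1)) := by field_simp; ring
        _ ≤ t * (1 + (t⁻¹ - 1)) ^ (1 - p) := by
          gcongr
          exact one_add_mul_self_le_rpow_one_add (by linarith [inv_pos.2 ht]) (by linarith)
        _ = t ^ p := by
          rw [add_sub_cancel, inv_rpow ht.le, rpow_sub ht, rpow_one]
          field_simp
    rw [div_le_iff_of_neg hp]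
    linarith
  · have hB := rpow_one_add_le_one_add_mul_self (s := t - 1) (by linarith) hp.le hp1
    rw [add_sub_cancel] at hB
    rw [div_le_iff₀ hp]
    linarith

theorem rpow_sub_rpow_div_le_mul_rpow {α τ g : ℝ} (hτ : 0 < τ) (hg : 0 < g) (hα0 : 0 < α)
    (hα1 : α ≠ 1) : (g ^ (1 - α) - τ ^ (1 - α)) / (1 - α) ≤ (g - τ) * τ ^ (-α) := by
  have ht := rpow_sub_one_div_le_sub_one (div_pos hg hτ) (p := 1 - α) (sub_ne_zero.2 hα1.symm)
    (by linarith)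
  have hτα : τ ^ (1 - α) = τ * τ ^ (-α) := by
    rw [sub_eq_add_neg, rpow_add hτ, rpow_one]
  rw [div_rpow hg.le hτ.le] at ht
  calc (g ^ (1 - α) - τ ^ (1 - α)) / (1 - α)
      = τ ^ (1 - α) * ((g ^ (1 - α) / τ ^ (1 - α) - 1) / (1 - α)) := by
        field_simp [(rpow_pos_of_pos hτ (1 - α)).ne']
    _ ≤ τ ^ (1 - α) * (g / τ - 1) := by gcongr
    _ = (g - τ) * τ ^ (-α) := by rw [hτα]; field_simp

theorem ConvexOn.le_left_of_bddAbove_Ici {f : ℝ → ℝ} {a x : ℝ} (hf : ConvexOn ℝ (Ici a) f)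
    (hbdd : BddAbove (f '' Ici a)) (hx : a ≤ x) : f x ≤ f a := by
  obtain ⟨C, hC⟩ := hbdd
  by_contra! hfx
  have hax : a < x := hx.lt_of_ne (by rintro rfl; exact hfx.false)
  set s := (f x - f a) / (x - a)
  have hs : 0 < s := div_pos (by linarith) (by linarith)
  -- Convexity forces `f` to grow at least linearly, with slope `s`, beyond `x`.
  set y := max x (a + (C - f a) / s + 1)
  have hxy : x ≤ y := le_max_left _ _
  have hslope : s ≤ (f y - f a) / (y - a) :=
    hf.secant_mono self_mem_Ici hx (hx.trans hxy) hax.ne' (hax.trans_le hxy).ne' hxy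
  rw [le_div_iff₀ (by linarith)] at hslope
  have hy : (C - f a) / s + 1 ≤ y - a := by linarith [le_max_right x (a + (C - f a) / s + 1)]
  have : C - f a + s ≤ s * (y - a) := by
    have := mul_le_mul_of_nonneg_left hy hs.le
    rwa [mul_add, mul_div_cancel₀ _ hs.ne', mul_one] at this
  linarith [hC (mem_image_of_mem f (show y ∈ Ici a from hx.trans hxy))]

noncomputable def logShift (τ η u : ℝ) : ℝ := τ + log (1 + η / u)

noncomputable def rescaledF (α τ η m u : ℝ) : ℝ :=
  (u + m) * (logShift τ η u ^ (1 - α) - τ ^ (1 - α)) / (1 - α)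

noncomputable def rescaledFDeriv (α τ η m u : ℝ) : ℝ :=
  (logShift τ η u ^ (1 - α) - τ ^ (1 - α)) / (1 - α)
    - (u + m) * logShift τ η u ^ (-α) * (η / (u * (u + η)))

noncomputable def rescaledFDeriv2 (α τ η m u : ℝ) : ℝ :=
  η * logShift τ η u ^ (-α - 1)
    * (logShift τ η u * (u * (2 * m - η) + m * η) - α * η * (u + m)) / (u * (u + η)) ^ 2

section
variable {α τ η m u : ℝ}

theorem le_logShift (hη : 0 ≤ η) (hu : 0 < u) : τ ≤ logShift τ η u := by
  have := log_nonneg (le_add_of_nonneg_right (div_nonneg hη hu.le) : (1 : ℝ) ≤ 1 + η / u)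
  unfold logShift; linarith

theorem logShift_sub_le (hη : 0 ≤ η) (hu : 0 < u) : logShift τ η u - τ ≤ η / u := by
  have := log_le_sub_one_of_pos (by positivity : 0 < 1 + η / u)
  unfold logShift; linarith

theorem add_two_mul_div_le_logShift (hη : 0 ≤ η) (hu : 0 < u) :
    τ + 2 * η / (2 * u + η) ≤ logShift τ η u := by
  have h := le_log_one_add_of_nonneg (div_nonneg hη hu.le)
  rw [show 2 * (η / u) / (η / u + 2) = 2 * η / (2 * u + η) by field_simp; ring] at h
  unfold logShift; linarith

theorem hasDerivAt_logShift (hη : 0 ≤ η) (hu : 0 < u) :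
    HasDerivAt (logShift τ η) (-η / (u * (u + η))) u := by
  have hq : HasDerivAt (fun u => 1 + η / u) (-η / u ^ 2) u := by
    simpa [div_eq_mul_inv] using ((hasDerivAt_inv hu.ne').const_mul η).const_add 1
  refine ((hq.log (by positivity)).const_add τ).congr_deriv ?_
  field_simp

theorem hasDerivAt_rescaledF (hα1 : α ≠ 1) (hτ : 0 < τ) (hη : 0 ≤ η) (hu : 0 < u) :
    HasDerivAt (rescaledF α τ η m) (rescaledFDeriv α τ η m u) u := by
  have hG := hτ.trans_le (le_logShift (τ := τ) hη hu)
  have hpow := (hasDerivAt_logShift (τ := τ) hη hu).rpow_const (p := 1 - α) (Or.inl hG.ne')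
  have := (((hasDerivAt_id u).add_const m).mul (hpow.sub_const (τ ^ (1 - α)))).div_const (1 - α)
  refine this.congr_deriv ?_
  simp only [rescaledFDeriv, id_eq, sub_sub_cancel_left]
  field_simp [sub_ne_zero.2 hα1.symm]
  ring

theorem hasDerivAt_rescaledFDeriv (hα1 : α ≠ 1) (hτ : 0 < τ) (hη : 0 ≤ η) (hu : 0 < u) :
    HasDerivAt (rescaledFDeriv α τ η m) (rescaledFDeriv2 α τ η m u) u := by
  have hG := hτ.trans_le (le_logShift (τ := τ) hη hu)
  have hG' := hasDerivAt_logShift (τ := τ) hη hu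
  have hw : HasDerivAt (fun u => η / (u * (u + η))) (-η * (2 * u + η) / (u * (u + η)) ^ 2) u := by
    have := (hasDerivAt_const u η).div ((hasDerivAt_id u).mul ((hasDerivAt_id u).add_const η))
      (mul_pos hu (show 0 < u + η by linarith)).ne'
    refine this.congr_deriv ?_
    simp only [id_eq, Pi.mul_apply]
    ring
  have := ((hG'.rpow_const (p := 1 - α) (Or.inl hG.ne')).sub_const (τ ^ (1 - α))).div_const (1 - α)
    |>.sub ((((hasDerivAt_id u).add_const m).mul (hG'.rpow_const (p := -α) (Or.inl hG.ne'))).mul hw)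
  refine this.congr_deriv ?_
  simp only [rescaledFDeriv2, id_eq, Pi.mul_apply, sub_sub_cancel_left]
  have hpow : logShift τ η u ^ (-α) = logShift τ η u ^ (-α - 1) * logShift τ η u := by
    rw [← rpow_add_one hG.ne', sub_add_cancel]
  rw [hpow]
  field_simp [sub_ne_zero.2 hα1.symm]
  ring

theorem mul_add_le_logShift_mul (hτ : 0 < τ) (hη : 0 ≤ η) (hu : 0 < u) (hτα : τ ≤ α)
    (hα2 : α ≤ 2) (hm : α * η ≤ τ * m) :
    α * η * (u + m) ≤ logShift τ η u * (u * (2 * m - η) + m * η) := by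
  have hηm : η ≤ m := le_of_mul_le_mul_left (by nlinarith) hτ
  have hP : 0 ≤ u * (2 * m - η) + m * η := by nlinarith
  have h2u : 0 < 2 * u + η := by linarith
  -- Clearing the denominator of the Padé bound leaves a sum of nonnegative terms.
  have hE : (τ * (2 * u + η) + 2 * η) * (u * (2 * m - η) + m * η) - α * η * (u + m) * (2 * u + η)
      = (τ * m - α * η) * (2 * u + η) ^ 2 + (α - τ) * η * u * (2 * u + η)
        + (2 - α) * (m - η) * η * (2 * u + η) + 2 * η ^ 2 * (u + η) := by ring
  have hE0 : 0 ≤ (τ * (2 * u + η) + 2 * η) * (u * (2 * m - η) + m * η)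
      - α * η * (u + m) * (2 * u + η) := by
    rw [hE]
    have := sub_nonneg.2 hm
    have := sub_nonneg.2 hτα
    have := sub_nonneg.2 hα2
    have := sub_nonneg.2 hηm
    positivity
  calc α * η * (u + m)
      ≤ (τ * (2 * u + η) + 2 * η) * (u * (2 * m - η) + m * η) / (2 * u + η) := by
        rw [le_div_iff₀ h2u]; linarith
    _ = (τ + 2 * η / (2 * u + η)) * (u * (2 * m - η) + m * η) := by field_simp
    _ ≤ logShift τ η u * (u * (2 * m - η) + m * η) := by
        gcongr
        exact add_two_mul_div_le_logShift hη hu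

theorem convexOn_rescaledF (hα1 : α ≠ 1) (hα2 : α ≤ 2) (hτ : 0 < τ) (hτα : τ ≤ α) (hη : 0 ≤ η)
    (hm : α * η ≤ τ * m) : ConvexOn ℝ (Ioi 0) (rescaledF α τ η m) := by
  refine convexOn_of_hasDerivWithinAt2_nonneg (f' := rescaledFDeriv α τ η m)
    (f'' := rescaledFDeriv2 α τ η m) (convex_Ioi 0)
    (fun u hu => (hasDerivAt_rescaledF hα1 hτ hη hu).continuousAt.continuousWithinAt) ?_ ?_ ?_ <;>
    rw [interior_Ioi] <;> intro u hu
  · exact (hasDerivAt_rescaledF hα1 hτ hη hu).hasDerivWithinAt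
  · exact (hasDerivAt_rescaledFDeriv hα1 hτ hη hu).hasDerivWithinAt
  · have hG := hτ.trans_le (le_logShift (τ := τ) hη hu)
    have hE := sub_nonneg.2 (mul_add_le_logShift_mul hτ hη hu hτα hα2 hm)
    unfold rescaledFDeriv2
    positivity

theorem rescaledF_le (hα0 : 0 < α) (hα1 : α ≠ 1) (hτ : 0 < τ) (hη : 0 ≤ η) (hu : 0 < u)
    (hum : 0 ≤ u + m) : rescaledF α τ η m u ≤ (u + m) * (η / u) * τ ^ (-α) := by
  have hG := le_logShift (τ := τ) hη hu
  calc rescaledF α τ η m u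
      = (u + m) * ((logShift τ η u ^ (1 - α) - τ ^ (1 - α)) / (1 - α)) := by
        rw [rescaledF, mul_div_assoc]
    _ ≤ (u + m) * ((logShift τ η u - τ) * τ ^ (-α)) := by
        gcongr
        exact rpow_sub_rpow_div_le_mul_rpow hτ (hτ.trans_le hG) hα0 hα1
    _ ≤ (u + m) * (η / u) * τ ^ (-α) := by
        rw [← mul_assoc]
        gcongr
        exact logShift_sub_le hη hu

theorem bddAbove_rescaledF (hα0 : 0 < α) (hα1 : α ≠ 1) (hτ : 0 < τ) (hη : 0 ≤ η) (hm : 0 ≤ m) :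
    BddAbove (rescaledF α τ η m '' Ici 1) := by
  refine ⟨(1 + m) * η * τ ^ (-α), ?_⟩
  rintro _ ⟨u, hu : 1 ≤ u, rfl⟩
  have hη_div : (u + m) * (η / u) ≤ (1 + m) * η := by
    rw [mul_div_assoc', div_le_iff₀ (by linarith)]
    nlinarith [mul_nonneg (mul_nonneg hm hη) (sub_nonneg.2 hu)]
  exact (rescaledF_le hα0 hα1 hτ hη (by linarith) (by linarith)).trans
    (mul_le_mul_of_nonneg_right hη_div (by positivity))

end

theorem f_eq_rescaledF {α τ η β : ℝ} (hη : η ≠ 0) (hβ : β ≠ 0) (x : ℝ) :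
    f α τ η β x = rescaledF α τ η (η * β - 1) ((x - 1) * η * β + 1) / (η * β)
      + τ ^ (1 - α) / (1 - α) := by
  rw [f, rescaledF, logShift, show (x - 1) * η * β + 1 + (η * β - 1) = x * (η * β) by ring]
  field_simp
  ring

/-- under Condition 1 (τ < α and the lower bound on β),
for α ∈ (0,2), α ≠ 1, we have f(x) ≤ f(1) for all x ≥ 1. -/
theorem stmt_0 (α τ η β : ℝ) (hα0 : 0 < α) (hα2 : α < 2) (hα1 : α ≠ 1)
    (hτ : 0 < τ) (hη : 0 < η) (hβ : 0 < β)
    (hcond1 : τ < α)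
    (hcond2 : β ≥ max ((α - 1) / (τ - τ ^ α * (τ + Real.log (1 + η)) ^ (1 - α)))
      (α / τ + 1 / η)) :
    ∀ x : ℝ, 1 ≤ x → f α τ η β x ≤ f α τ η β 1 := by
  have hm : α * η ≤ τ * (η * β - 1) := by
    have hβ' := le_of_max_le_right hcond2
    rw [div_add_div _ _ hτ.ne' hη.ne', div_le_iff₀ (mul_pos hτ hη)] at hβ'
    linarith
  have hconv := (convexOn_rescaledF hα1 hα2.le hτ hcond1.le hη.le hm).subset
    (Ici_subset_Ioi.2 one_pos) (convex_Ici 1)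
  have hbdd := bddAbove_rescaledF hα0 hα1 hτ hη.le (m := η * β - 1)
    (by nlinarith [mul_pos hα0 hη])
  intro x hx
  have hu : 1 ≤ (x - 1) * η * β + 1 := by
    have := mul_nonneg (mul_nonneg (sub_nonneg.2 hx) hη.le) hβ.le
    linarith
  have := hconv.le_left_of_bddAbove_Ici hbdd hu
  rw [f_eq_rescaledF hη.ne' hβ.ne', f_eq_rescaledF hη.ne' hβ.ne', sub_self, zero_mul, zero_mul,
    zero_add]
  gcongr
end

section
/- Let α, τ, η, β be real numbers with α ≥ 2, τ > 0, η > 0, β > 0, and suppose Condition 2 holds: α·(2^(α−1) − 1)/(τ·(α−1)) > 1, log(1+η) ≤ τ, and β ≥ max( (α−1)/(τ − τ^α·(τ + log(1+η))^(1−α)), α·(2^(α−1) − 1)/(τ·(α−1)) + 1/η ). Then f(x) ≤ f(1) for all real x ≥ 1. -/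
open Real Filter

open Set

/-!
Since `1 - α < 0`, `f` is nonincreasing on `[1, ∞)` once
`τ ^ (1 - α) ≤ (τ + s) ^ (1 - α) + M (τ + s) ^ (-α)`, where `A = (x - 1) η β + 1`,
`s = log (1 + η / A)` and `M = (α - 1) η (A - 1 + η β) / (A (A + η))`; this bracket is
`(1 - α) f'(x)`. As `s ≤ log (1 + η) ≤ τ`, convexity of `t ↦ t ^ (α - 1)` gives
`(1 + u) ^ α ≤ 1 + α u + α (2 ^ (α - 1) - 1) u ^ 2 / 2` for `u = s / τ ∈ [0, 1]`, reducing the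
claim to `(α - 1) s + α (2 ^ (α - 1) - 1) s ^ 2 / (2 τ) ≤ M`. Bounding `s` and `s ^ 2` through
`log w ≤ sinh (log w) = (w - w⁻¹) / 2` (at `w = 1 + η / A` and `w = √(1 + η / A)`), the
dependence on `A` cancels and what remains is `β ≥ (1 + c) / 2 + 1 / η` with
`c = α (2 ^ (α - 1) - 1) / (τ (α - 1))`, which follows from `β ≥ c + 1 / η` and `c > 1`.
-/

lemma one_add_rpow_le_chord {p u : ℝ} (hp : 1 ≤ p) (hu0 : 0 ≤ u) (hu1 : u ≤ 1) :
    (1 + u) ^ p ≤ 1 + (2 ^ p - 1) * u := by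
  have h := (convexOn_rpow hp).2 (mem_Ici.2 zero_le_one) (mem_Ici.2 zero_le_two)
    (sub_nonneg.2 hu1) hu0 (sub_add_cancel 1 u)
  simp only [smul_eq_mul, one_rpow] at h
  rw [show (1 - u) * 1 + u * 2 = 1 + u by ring] at h
  linarith

lemma one_add_rpow_le_quadratic {α u : ℝ} (hα : 2 ≤ α) (hu0 : 0 ≤ u) (hu1 : u ≤ 1) :
    (1 + u) ^ α ≤ 1 + α * u + α * (2 ^ (α - 1) - 1) / 2 * u ^ 2 := by
  set Q : ℝ := 2 ^ (α - 1) - 1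
  let g : ℝ → ℝ := fun t => 1 + α * t + α * Q / 2 * t ^ 2 - (1 + t) ^ α
  have hg : ∀ t ∈ Icc (0 : ℝ) 1,
      HasDerivAt g (α + α * Q / 2 * (2 * t) - 1 * α * (1 + t) ^ (α - 1)) t := by
    intro t ht
    have hpow : HasDerivAt (fun t : ℝ => (1 + t) ^ α) (1 * α * (1 + t) ^ (α - 1)) t :=
      ((hasDerivAt_id' t).const_add 1).rpow_const (Or.inl (by linarith [ht.1]))
    have hquad : HasDerivAt (fun t : ℝ => 1 + α * t + α * Q / 2 * t ^ 2)
        (α + α * Q / 2 * (2 * t)) t :=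
      ((((hasDerivAt_id' t).const_mul α).const_add 1).add
        ((hasDerivAt_pow 2 t).const_mul (α * Q / 2))).congr_deriv (by norm_num)
    exact hquad.sub hpow
  have hmono : MonotoneOn g (Icc 0 1) := by
    refine monotoneOn_of_hasDerivWithinAt_nonneg (convex_Icc 0 1)
      (fun t ht => (hg t ht).continuousAt.continuousWithinAt)
      (fun t ht => (hg t (interior_subset ht)).hasDerivWithinAt) fun t ht => ?_
    rw [interior_Icc] at ht
    have hchord := one_add_rpow_le_chord (p := α - 1) (by linarith) ht.1.le ht.2.le
    nlinarith [mul_le_mul_of_nonneg_left hchord (by linarith : (0 : ℝ) ≤ α)]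
  have := hmono (left_mem_Icc.2 zero_le_one) ⟨hu0, hu1⟩ hu0
  simp only [g] at this
  norm_num at this
  linarith

lemma log_le_half_sub_inv {w : ℝ} (hw : 1 ≤ w) : log w ≤ (w - w⁻¹) / 2 := by
  rw [← sinh_log (by linarith)]
  exact self_le_sinh_iff.2 (log_nonneg hw)

lemma log_one_add_le_div_sqrt {v : ℝ} (hv : 0 ≤ v) : log (1 + v) ≤ v / √(1 + v) := by
  have hw : 1 ≤ √(1 + v) := one_le_sqrt.2 (by linarith)
  have hsq : √(1 + v) ^ 2 = 1 + v := sq_sqrt (by linarith)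
  calc log (1 + v) = 2 * log √(1 + v) := by rw [log_sqrt (by linarith)]; ring
    _ ≤ √(1 + v) - (√(1 + v))⁻¹ := by linarith [log_le_half_sub_inv hw]
    _ = v / √(1 + v) := by field_simp; linarith

lemma log_one_add_le_mul_div {v : ℝ} (hv : 0 ≤ v) :
    log (1 + v) ≤ v * (2 + v) / (2 * (1 + v)) := by
  calc log (1 + v) ≤ (1 + v - (1 + v)⁻¹) / 2 := log_le_half_sub_inv (by linarith)
    _ = v * (2 + v) / (2 * (1 + v)) := by field_simp; ring

lemma log_one_add_div_add_mul_sq_le {η β c A : ℝ} (hη : 0 < η) (hA : 0 < A) (hc : 0 ≤ c)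
    (hβ : (1 + c) / 2 + 1 / η ≤ β) :
    log (1 + η / A) + c / 2 * log (1 + η / A) ^ 2 ≤ η * (A - 1 + η * β) / (A * (A + η)) := by
  set s := log (1 + η / A)
  have hv : 0 ≤ η / A := by positivity
  have hs : s ≤ η * (2 * A + η) / (2 * A * (A + η)) := by
    convert log_one_add_le_mul_div hv using 1
    field_simp
  have hs2 : s ^ 2 ≤ η ^ 2 / (A * (A + η)) :=
    calc s ^ 2 ≤ (η / A / √(1 + η / A)) ^ 2 :=
          pow_le_pow_left₀ (log_nonneg (by linarith)) (log_one_add_le_div_sqrt hv) 2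
      _ = η ^ 2 / (A * (A + η)) := by
          rw [div_pow, sq_sqrt (by positivity)]
          field_simp
  have hβ' : 0 ≤ 2 * η * β - η * (1 + c) - 2 := by
    have := mul_le_mul_of_nonneg_left hβ (by positivity : 0 ≤ 2 * η)
    field_simp at this
    linarith
  have hgap : η * (A - 1 + η * β) / (A * (A + η))
      - (η * (2 * A + η) / (2 * A * (A + η)) + c / 2 * (η ^ 2 / (A * (A + η))))
      = η * (2 * η * β - η * (1 + c) - 2) / (2 * A * (A + η)) := by
    field_simp
    ring
  calc s + c / 2 * s ^ 2
      ≤ η * (2 * A + η) / (2 * A * (A + η)) + c / 2 * (η ^ 2 / (A * (A + η))) := by gcongr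
    _ ≤ η * (A - 1 + η * β) / (A * (A + η)) := by
      rw [← sub_nonneg, hgap]
      positivity

lemma rpow_one_sub_le_add_mul_rpow_neg {α τ s M : ℝ} (hα : 2 ≤ α) (hτ : 0 < τ) (hs0 : 0 ≤ s)
    (hsτ : s ≤ τ) (hM : (α - 1) * s + α * (2 ^ (α - 1) - 1) / (2 * τ) * s ^ 2 ≤ M) :
    τ ^ (1 - α) ≤ (τ + s) ^ (1 - α) + M * (τ + s) ^ (-α) := by
  have hτs : 0 < τ + s := by linarith
  have hquad : τ * (1 + s / τ) ^ α ≤ τ + s + M :=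
    calc τ * (1 + s / τ) ^ α
        ≤ τ * (1 + α * (s / τ) + α * (2 ^ (α - 1) - 1) / 2 * (s / τ) ^ 2) :=
          mul_le_mul_of_nonneg_left (one_add_rpow_le_quadratic hα (by positivity)
            ((div_le_one hτ).2 hsτ)) hτ.le
      _ = τ + s + ((α - 1) * s + α * (2 ^ (α - 1) - 1) / (2 * τ) * s ^ 2) := by
          field_simp
          ring
      _ ≤ τ + s + M := by linarith
  have hfac : (τ + s) ^ α = τ ^ α * (1 + s / τ) ^ α := by
    rw [← mul_rpow hτ.le (by positivity)]
    congr 1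
    field_simp
  have hτα : 0 < τ ^ α := by positivity
  rw [rpow_sub hτ, rpow_sub hτs, rpow_neg hτs.le, rpow_one, rpow_one, hfac,
    ← div_eq_mul_inv, ← add_div, div_le_div_iff₀ hτα (by positivity)]
  nlinarith [mul_le_mul_of_nonneg_left hquad hτα.le]

lemma hasDerivAt_log_one_add_div {η β x : ℝ} (hη : 0 < η) (hA : 0 < (x - 1) * η * β + 1) :
    HasDerivAt (fun y => log (1 + η / ((y - 1) * η * β + 1)))
      (-(η ^ 2 * β) / (((x - 1) * η * β + 1) * ((x - 1) * η * β + 1 + η))) x := by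
  have hlin : HasDerivAt (fun y => (y - 1) * η * β + 1) (η * β) x := by
    simpa using ((((hasDerivAt_id' x).sub_const 1).mul_const η).mul_const β).add_const 1
  refine (((hasDerivAt_const x η).fun_div hlin hA.ne').const_add 1).log
    (by positivity) |>.congr_deriv ?_
  field_simp
  ring

lemma hasDerivAt_f {α τ η β x A : ℝ} (hτ : 0 < τ) (hη : 0 < η)
    (hA : (x - 1) * η * β + 1 = A) (hA0 : 0 < A) :
    HasDerivAt (f α τ η β)
      (((τ + log (1 + η / A)) ^ (1 - α)
        + (α - 1) * η * (A - 1 + η * β) / (A * (A + η)) * (τ + log (1 + η / A)) ^ (-α)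
        - τ ^ (1 - α)) / (1 - α)) x := by
  have hs := hasDerivAt_log_one_add_div hη (hA ▸ hA0)
  rw [hA] at hs
  have hτs : 0 < τ + log (1 + η / A) := by
    have := log_nonneg (by have := div_pos hη hA0; linarith : (1 : ℝ) ≤ 1 + η / A)
    linarith
  have hP := (hs.const_add τ).rpow_const (p := 1 - α) (Or.inl (by rw [hA]; exact hτs.ne'))
  refine (((hasDerivAt_id' x).mul hP).div_const (1 - α)).sub
    ((((hasDerivAt_id' x).sub_const 1).mul_const (τ ^ (1 - α))).div_const (1 - α))
    |>.congr_deriv ?_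
  subst hA
  rw [show 1 - α - 1 = -α by ring]
  field_simp
  ring

lemma f_antitoneOn {α τ η β : ℝ} (hα : 2 ≤ α) (hτ : 0 < τ) (hη : 0 < η)
    (hlog : log (1 + η) ≤ τ)
    (hβ : (1 + α * (2 ^ (α - 1) - 1) / (τ * (α - 1))) / 2 + 1 / η ≤ β) :
    AntitoneOn (f α τ η β) (Ici 1) := by
  obtain ⟨c, hc⟩ : ∃ c, c = α * (2 ^ (α - 1) - 1) / (τ * (α - 1)) := ⟨_, rfl⟩
  rw [← hc] at hβ
  have hc0 : 0 ≤ c := by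
    rw [hc]
    have : (1 : ℝ) ≤ 2 ^ (α - 1) := one_le_rpow (by norm_num) (by linarith)
    have : 0 ≤ α - 1 := by linarith
    positivity
  have hβ0 : 0 ≤ β := by
    have := one_div_pos.2 hη
    linarith
  have hderiv : ∀ x ∈ Ici (1 : ℝ), ∃ d, HasDerivAt (f α τ η β) d x ∧ d ≤ 0 := by
    intro x hx
    obtain ⟨A, hA⟩ : ∃ A, A = (x - 1) * η * β + 1 := ⟨_, rfl⟩
    have hA1 : 1 ≤ A := by
      have := sub_nonneg.2 (mem_Ici.1 hx)
      rw [hA]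
      exact le_add_of_nonneg_left (by positivity)
    have hA0 : 0 < A := by linarith
    refine ⟨_, hasDerivAt_f hτ hη hA.symm hA0, div_nonpos_of_nonneg_of_nonpos ?_ (by linarith)⟩
    have hv : η / A ≤ η := div_le_self hη.le hA1
    have hs0 : 0 ≤ log (1 + η / A) := log_nonneg (by have := div_pos hη hA0; linarith)
    have hsτ : log (1 + η / A) ≤ τ :=
      (log_le_log (by positivity) (by linarith)).trans hlog
    refine sub_nonneg.2 (rpow_one_sub_le_add_mul_rpow_neg hα hτ hs0 hsτ ?_)
    have hK : α * (2 ^ (α - 1) - 1) / (2 * τ) = (α - 1) * (c / 2) := by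
      have : α - 1 ≠ 0 := by linarith
      rw [hc]
      field_simp
    have hbound := mul_le_mul_of_nonneg_left (log_one_add_div_add_mul_sq_le hη hA0 hc0 hβ)
      (by linarith : (0 : ℝ) ≤ α - 1)
    rw [hK]
    linear_combination hbound
  choose! d hd hd0 using hderiv
  exact antitoneOn_of_hasDerivWithinAt_nonpos (convex_Ici 1)
    (fun x hx => (hd x hx).continuousAt.continuousWithinAt)
    (fun x hx => (hd x (interior_subset hx)).hasDerivWithinAt)
    (fun x hx => hd0 x (interior_subset hx))

theorem stmt_1_general (α τ η β : ℝ) (hα : 2 ≤ α)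
    (hτ : 0 < τ) (hη : 0 < η)
    (hcond1 : α * (2 ^ (α - 1) - 1) / (τ * (α - 1)) > 1)
    (hcond2 : Real.log (1 + η) ≤ τ)
    (hcond3 : β ≥ max ((α - 1) / (τ - τ ^ α * (τ + Real.log (1 + η)) ^ (1 - α)))
      (α * (2 ^ (α - 1) - 1) / (τ * (α - 1)) + 1 / η)) :
    ∀ x : ℝ, 1 ≤ x → f α τ η β x ≤ f α τ η β 1 := by
  intro x hx
  have hβ := (le_max_right _ _).trans hcond3
  exact f_antitoneOn hα hτ hη hcond2 (by linarith) self_mem_Ici hx hx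

/-- under Condition 2, for α ≥ 2, f(x) ≤ f(1) for all x ≥ 1. -/
theorem stmt_1 (α τ η β : ℝ) (hα : 2 ≤ α)
    (hτ : 0 < τ) (hη : 0 < η) (hβ : 0 < β)
    (hcond1 : α * (2 ^ (α - 1) - 1) / (τ * (α - 1)) > 1)
    (hcond2 : Real.log (1 + η) ≤ τ)
    (hcond3 : β ≥ max ((α - 1) / (τ - τ ^ α * (τ + Real.log (1 + η)) ^ (1 - α)))
      (α * (2 ^ (α - 1) - 1) / (τ * (α - 1)) + 1 / η)) :
    ∀ x : ℝ, 1 ≤ x → f α τ η β x ≤ f α τ η β 1 :=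
  stmt_1_general α τ η β hα hτ hη hcond1 hcond2 hcond3
end

section
/- Let α, τ, η, β be real numbers with α ∈ (0,2), α ≠ 1, η > 0, 0 < τ < α, and β ≥ α/τ + 1/η. Then for every real y ≥ 1/η at which the first derivative of g vanishes (deriv g y = 0), the second derivative of g is strictly positive (deriv (deriv g) y > 0). -/
open Real Filter

/-- The function `g` from the paper (change of variables `y = (x−1)β + 1/η`):
`g(y) = (y/β + 1 − 1/(ηβ))·(τ + log(1 + 1/y))^(1−α)/(1−α) − (y/β − 1/(ηβ))·τ^(1−α)/(1−α)`. -/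
noncomputable def g (α τ η β : ℝ) : ℝ → ℝ := fun y =>
  (y / β + 1 - 1 / (η * β)) * (τ + Real.log (1 + 1 / y)) ^ (1 - α) / (1 - α)
    - (y / β - 1 / (η * β)) * τ ^ (1 - α) / (1 - α)

/-!
Writing `L = τ + log (1 + 1/y)` and `b = β - 1/η`, a direct computation gives
`g''(y) = L^(-α-1) * (L * ((2b - 1) y + b) - α (y + b)) / (β (y (y + 1))²)`.
The numerator is increasing in `L`, and the series of `log (1 + 1/y)` in odd powers of
`1/(2y + 1)` gives `L > τ + 2/(2y + 1)`. Multiplied by `τ (2y + 1)`, the resulting lower bound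
is a polynomial in `y` and `τ b - α` with positive coefficients, since `τ < α < 2`.
-/

theorem log_one_add_one_div_pos {y : ℝ} (hy : 0 < y) : 0 < log (1 + 1 / y) :=
  log_pos (by simp [hy])

theorem two_div_two_mul_add_one_lt_log_one_add_one_div {y : ℝ} (hy : 0 < y) :
    2 / (2 * y + 1) < log (1 + 1 / y) := by
  have hle := sum_le_hasSum (Finset.range 2) (fun k _ => by positivity)
    (hasSum_log_one_add_inv hy)
  have hsecond : 0 < ((2 * y + 1) ^ 3)⁻¹ := by positivity
  norm_num [Finset.sum_range_succ] at hle
  rw [div_eq_mul_inv, one_div]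
  linarith

theorem hasDerivAt_log_one_add_one_div {y : ℝ} (hy : 0 < y) :
    HasDerivAt (fun t => log (1 + 1 / t)) (-(y * (y + 1))⁻¹) y := by
  have h : HasDerivAt (fun t => 1 + 1 / t) (-(y ^ 2)⁻¹) y := by
    simpa [one_div] using (hasDerivAt_inv hy.ne').const_add 1
  refine (h.log (by positivity)).congr_deriv ?_
  field_simp

theorem mul_linear_sub_pos_of_lt {α τ b y L : ℝ} (hα2 : α < 2) (hτ : 0 < τ) (hτα : τ < α)
    (hb : α ≤ τ * b) (hy : 0 < y) (hL : τ + 2 / (2 * y + 1) < L) :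
    0 < L * ((2 * b - 1) * y + b) - α * (y + b) := by
  have h2y : 0 < 2 * y + 1 := by linarith
  have hcoeff : 0 < (2 * b - 1) * y + b := by nlinarith
  have hL' : τ * (2 * y + 1) + 2 < L * (2 * y + 1) := by
    rw [← lt_sub_iff_add_lt', div_lt_iff₀ h2y] at hL
    linarith
  have hbound : 0 < (τ * (2 * y + 1) + 2) * ((2 * b - 1) * y + b)
      - α * (y + b) * (2 * y + 1) := by
    refine pos_of_mul_pos_right (a := τ) ?_ hτ.le
    have hd : 0 < α - τ := by linarith
    have he : 0 < 2 - α := by linarith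
    have hlin : 0 ≤ (τ * b - α) * ((2 * y + 1) * (τ * (2 * y + 1) + (2 - α))) :=
      mul_nonneg (by linarith) (by positivity)
    have hquad : 0 < 2 * τ * (α - τ) * y ^ 2
        + ((α - τ) * (2 - α) + τ * (α - τ) + α * (τ + (2 - α))) * y + α * (τ + (2 - α)) := by
      have hα : 0 < α := by linarith
      generalize α - τ = d at hd ⊢
      generalize 2 - α = e at he ⊢
      positivity
    linear_combination hlin + hquad
  nlinarith

noncomputable def gDeriv (α τ η β : ℝ) (y : ℝ) : ℝ :=
  ((τ + log (1 + 1 / y)) ^ (1 - α) - τ ^ (1 - α)) / (β * (1 - α))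
    - (y / β + 1 - 1 / (η * β)) * (τ + log (1 + 1 / y)) ^ (-α) / (y * (y + 1))

section Derivatives

variable {α τ η β y : ℝ}

theorem hasDerivAt_g (hα : α ≠ 1) (hτ : 0 < τ) (hy : 0 < y) :
    HasDerivAt (g α τ η β) (gDeriv α τ η β y) y := by
  have hL := (hasDerivAt_log_one_add_one_div hy).const_add τ
  have hLpos : 0 < τ + log (1 + 1 / y) := by linarith [log_one_add_one_div_pos hy]
  have hpow := hL.rpow_const (p := 1 - α) (Or.inl hLpos.ne')
  have hA : HasDerivAt (fun t : ℝ => t / β + 1 - 1 / (η * β)) β⁻¹ y := by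
    simpa using (((hasDerivAt_id y).div_const β).add_const 1).sub_const (1 / (η * β))
  have hB : HasDerivAt (fun t : ℝ => t / β - 1 / (η * β)) β⁻¹ y := by
    simpa using ((hasDerivAt_id y).div_const β).sub_const (1 / (η * β))
  refine (((hA.mul hpow).div_const (1 - α)).sub
    ((hB.mul_const (τ ^ (1 - α))).div_const (1 - α))).congr_deriv ?_
  have h1α : 1 - α ≠ 0 := sub_ne_zero.2 hα.symm
  rw [sub_sub_cancel_left, gDeriv]
  field_simp
  ring

theorem hasDerivAt_gDeriv (hα : α ≠ 1) (hτ : 0 < τ) (hβ : β ≠ 0) (hy : 0 < y) :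
    HasDerivAt (gDeriv α τ η β)
      ((τ + log (1 + 1 / y)) ^ (-α - 1) * ((τ + log (1 + 1 / y)) * ((2 * (β - 1 / η) - 1) * y
        + (β - 1 / η)) - α * (y + (β - 1 / η))) / (β * (y * (y + 1)) ^ 2)) y := by
  have hL := (hasDerivAt_log_one_add_one_div hy).const_add τ
  have hLpos : 0 < τ + log (1 + 1 / y) := by linarith [log_one_add_one_div_pos hy]
  have hpow₁ := hL.rpow_const (p := 1 - α) (Or.inl hLpos.ne')
  have hpow₀ := hL.rpow_const (p := -α) (Or.inl hLpos.ne')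
  have hA : HasDerivAt (fun t : ℝ => t / β + 1 - 1 / (η * β)) β⁻¹ y := by
    simpa using (((hasDerivAt_id y).div_const β).add_const 1).sub_const (1 / (η * β))
  have hQ : HasDerivAt (fun t : ℝ => t * (t + 1)) (2 * y + 1) y := by
    refine ((hasDerivAt_id y).mul ((hasDerivAt_id y).add_const 1)).congr_deriv ?_
    simp only [id, one_mul, mul_one]
    ring
  refine (((hpow₁.sub_const (τ ^ (1 - α))).div_const (β * (1 - α))).sub
    ((hA.mul hpow₀).div hQ (by positivity))).congr_deriv ?_
  have h1α : 1 - α ≠ 0 := sub_ne_zero.2 hα.symm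
  have hsplit : (τ + log (1 + 1 / y)) ^ (-α)
      = (τ + log (1 + 1 / y)) * (τ + log (1 + 1 / y)) ^ (-α - 1) := by
    conv_lhs => rw [show -α = 1 + (-α - 1) by ring, rpow_add hLpos, rpow_one]
  simp only [Pi.mul_apply, sub_sub_cancel_left, hsplit]
  set L := τ + log (1 + 1 / y)
  field_simp
  ring

end Derivatives

theorem stmt_6_general (α τ η β : ℝ) (hα2 : α < 2) (hα1 : α ≠ 1)
    (hη : 0 < η) (hτ0 : 0 < τ) (hτα : τ < α)
    (hβ : β ≥ α / τ + 1 / η) :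
    ∀ y : ℝ, 1 / η ≤ y → deriv (g α τ η β) y = 0 →
      0 < deriv (deriv (g α τ η β)) y := by
  intro y hy _
  have hy0 : 0 < y := (one_div_pos.2 hη).trans_le hy
  have hα0 : 0 < α := hτ0.trans hτα
  have hβ0 : 0 < β := lt_of_lt_of_le (by positivity) hβ
  have hb : α ≤ τ * (β - 1 / η) := by
    rw [← div_le_iff₀' hτ0]
    linarith
  have hderiv : deriv (g α τ η β) =ᶠ[nhds y] gDeriv α τ η β := by
    filter_upwards [Ioi_mem_nhds hy0] with z hz
    exact (hasDerivAt_g hα1 hτ0 hz).deriv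
  rw [hderiv.deriv_eq, (hasDerivAt_gDeriv hα1 hτ0 hβ0.ne' hy0).deriv]
  have hLpos : 0 < τ + log (1 + 1 / y) := by linarith [log_one_add_one_div_pos hy0]
  have hnum := mul_linear_sub_pos_of_lt (L := τ + log (1 + 1 / y)) hα2 hτ0 hτα hb hy0
    (by linarith [two_div_two_mul_add_one_lt_log_one_add_one_div hy0])
  exact div_pos (mul_pos (rpow_pos_of_pos hLpos _) hnum) (by positivity)

/-- for α ∈ (0,2), α ≠ 1, 0 < τ < α and β ≥ α/τ + 1/η,
at every y ≥ 1/η where g′(y) = 0 we have g″(y) > 0. -/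
theorem stmt_6 (α τ η β : ℝ) (hα0 : 0 < α) (hα2 : α < 2) (hα1 : α ≠ 1)
    (hη : 0 < η) (hτ0 : 0 < τ) (hτα : τ < α)
    (hβ : β ≥ α / τ + 1 / η) :
    ∀ y : ℝ, 1 / η ≤ y → deriv (g α τ η β) y = 0 →
      0 < deriv (deriv (g α τ η β)) y :=
  stmt_6_general α τ η β hα2 hα1 hη hτ0 hτα hβ
end

section
/- Let α, τ, η, β be real numbers with α ≥ 0, α ≠ 1, τ > 0, η > 0, β > 0. Then f(x) tends to τ^(−α)·(1 + β·τ − α)/(β·(1−α)) as x tends to +∞, i.e. Tendsto f atTop (nhds (τ^(−α)·(1 + β·τ − α)/(β·(1−α)))). -/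
/-!
Put `u x = η / ((x − 1)ηβ + 1)` and `F t = (τ + log (1 + t))^(1−α)`, so that
`(1 − α) f x = x (F (u x) − F 0) + τ^(1−α)`. Since `u x → 0` while `x u x → 1/β`, the first
term tends to `F'(0)/β = (1 − α) τ^(−α)/β`.
-/

open Real Filter Asymptotics
open scoped Topology

theorem HasDerivAt.tendsto_mul_sub {ι : Type*} {l : Filter ι} {h : ℝ → ℝ} {d a c : ℝ}
    (hh : HasDerivAt h d a) {φ ψ : ι → ℝ} (hφ : Tendsto φ l (𝓝 0))
    (hψφ : Tendsto (fun i => ψ i * φ i) l (𝓝 c)) :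
    Tendsto (fun i => ψ i * (h (a + φ i) - h a)) l (𝓝 (d * c)) := by
  have hrem : (fun i => h (a + φ i) - h a - φ i • d) =o[l] φ :=
    (hasDerivAt_iff_isLittleO_nhds_zero.mp hh).comp_tendsto hφ
  have hrem' : Tendsto (fun i => ψ i * (h (a + φ i) - h a - φ i • d)) l (𝓝 0) :=
    (isLittleO_one_iff ℝ).mp <|
      ((isBigO_refl ψ l).mul_isLittleO hrem).trans_isBigO (hψφ.isBigO_one ℝ)
  refine (zero_add (d * c) ▸ hrem'.add (hψφ.const_mul d)).congr fun i => ?_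
  simp only [smul_eq_mul]
  ring

theorem tendsto_mul_div_affine_atTop {η β : ℝ} (hη : η ≠ 0) (hβ : β ≠ 0) :
    Tendsto (fun x => x * (η / ((x - 1) * η * β + 1))) atTop (𝓝 β⁻¹) := by
  have hlim : Tendsto (fun x => (β + (1 - η * β) / η * x⁻¹)⁻¹) atTop (𝓝 β⁻¹) := by
    simpa using ((tendsto_inv_atTop_zero.const_mul ((1 - η * β) / η)).const_add β).inv₀
      (by simpa using hβ)
  refine hlim.congr' ?_
  filter_upwards [eventually_gt_atTop 0] with x hx
  field_simp
  ring

theorem hasDerivAt_rpow_add_log_one_add {τ p : ℝ} (hτ : 0 < τ) :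
    HasDerivAt (fun t => (τ + log (1 + t)) ^ p) (p * τ ^ (p - 1)) 0 := by
  have hlog : HasDerivAt (fun t => τ + log (1 + t)) 1 0 := by
    simpa using (((hasDerivAt_id (0 : ℝ)).const_add 1).log (by norm_num)).const_add τ
  simpa using hlog.rpow_const (p := p) (by simp [hτ.ne'])

theorem stmt_9_general (α τ η β : ℝ) (hα1 : α ≠ 1)
    (hτ : 0 < τ) (hη : 0 < η) (hβ : 0 < β) :
    Filter.Tendsto (f α τ η β) Filter.atTop
      (nhds (τ ^ (-α) * (1 + β * τ - α) / (β * (1 - α)))) := by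
  set u : ℝ → ℝ := fun x => η / ((x - 1) * η * β + 1)
  have hxu : Tendsto (fun x => x * u x) atTop (𝓝 β⁻¹) := tendsto_mul_div_affine_atTop hη.ne' hβ.ne'
  have hu : Tendsto u atTop (𝓝 0) := by
    have h := hxu.mul tendsto_inv_atTop_zero
    rw [mul_zero] at h
    refine h.congr' ?_
    filter_upwards [eventually_ne_atTop 0] with x hx
    field_simp
  have hmain := (hasDerivAt_rpow_add_log_one_add (p := 1 - α) hτ).tendsto_mul_sub hu hxu
  have hf := (hmain.add_const (τ ^ (1 - α))).div_const (1 - α)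
  have h1α : (1 : ℝ) - α ≠ 0 := sub_ne_zero.mpr hα1.symm
  have hτpow : τ ^ (1 - α) = τ * τ ^ (-α) := by
    rw [sub_eq_add_neg, rpow_add hτ, rpow_one]
  convert hf using 2 with x
  · simp only [f, u, zero_add, add_zero, log_one]
    ring
  · rw [sub_sub_cancel_left, hτpow]
    field_simp
    ring

/-- the limit of f at +∞ is τ^(−α)·(1 + βτ − α)/(β(1−α)). -/
theorem stmt_9 (α τ η β : ℝ) (hα0 : 0 ≤ α) (hα1 : α ≠ 1)
    (hτ : 0 < τ) (hη : 0 < η) (hβ : 0 < β) :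
    Filter.Tendsto (f α τ η β) Filter.atTop
      (nhds (τ ^ (-α) * (1 + β * τ - α) / (β * (1 - α)))) :=
  stmt_9_general α τ η β hα1 hτ hη hβ
end

section
/- Let τ, η, β be real numbers with τ > 0, η > 0, β > 0. Then f₁(x) tends to 1/(β·τ) + log τ as x tends to +∞, i.e. Tendsto f₁ atTop (nhds (1/(β·τ) + log τ)). -/
open Real Filter

/-- The function `f₁` from the paper (Eq. (48)):
`f₁(x) = x·log(τ + log(1 + η/((x−1)ηβ + 1))) − (x−1)·log τ`. -/
noncomputable def f₁ (τ η β : ℝ) : ℝ → ℝ := fun x =>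
  x * Real.log (τ + Real.log (1 + η / ((x - 1) * η * β + 1)))
    - (x - 1) * Real.log τ

open Topology

/-! With `u x = η / ((x - 1)ηβ + 1)` and `w x = log (1 + u x) / τ` one has
`f₁ x = x · log (1 + w x) + log τ`. Since `x · u x → 1/β`, the fact that `x · g x → t` implies
`x · log (1 + g x) → t` gives `x · w x → 1/(βτ)`, and applied once more, the limit. -/

lemma tendsto_mul_div_affine_atTop_s10 (p : ℝ) {q : ℝ} (hq : q ≠ 0) (r : ℝ) :
    Tendsto (fun x => x * (p / (q * x + r))) atTop (𝓝 (p / q)) := by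
  have hden : Tendsto (fun x : ℝ => q + r / x) atTop (𝓝 q) := by
    simpa using tendsto_const_nhds.add (tendsto_const_nhds.div_atTop (tendsto_id (α := ℝ)))
  refine (tendsto_const_nhds.div hden hq).congr' ?_
  filter_upwards [eventually_ne_atTop 0] with x hx
  show p / (q + r / x) = x * (p / (q * x + r))
  rw [add_div' _ _ _ hx, div_div_eq_mul_div, mul_div_assoc', mul_comm]

lemma tendsto_zero_of_tendsto_mul_atTop {g : ℝ → ℝ} {t : ℝ}
    (hg : Tendsto (fun x => x * g x) atTop (𝓝 t)) : Tendsto g atTop (𝓝 0) := by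
  have h := hg.mul tendsto_inv_atTop_zero
  rw [mul_zero] at h
  refine h.congr' ?_
  filter_upwards [eventually_ne_atTop 0] with x hx
  field_simp

/-- the limit of f₁ at +∞ is 1/(βτ) + log τ. -/
theorem stmt_10 (τ η β : ℝ) (hτ : 0 < τ) (hη : 0 < η) (hβ : 0 < β) :
    Filter.Tendsto (f₁ τ η β) Filter.atTop
      (nhds (1 / (β * τ) + Real.log τ)) := by
  set g : ℝ → ℝ := fun x => log (1 + η / ((x - 1) * η * β + 1))
  have hxu : Tendsto (fun x => x * (η / ((x - 1) * η * β + 1))) atTop (𝓝 (1 / β)) := by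
    have h := tendsto_mul_div_affine_atTop_s10 η (mul_ne_zero hη.ne' hβ.ne') (1 - η * β)
    rw [div_mul_cancel_left₀ hη.ne', ← one_div] at h
    convert h using 4; ring
  have hxw : Tendsto (fun x => x * (g x / τ)) atTop (𝓝 (1 / (β * τ))) := by
    have h := (tendsto_mul_log_one_add_of_tendsto hxu).div_const τ
    simpa only [mul_div_assoc, div_div] using h
  have hw : ∀ᶠ x in atTop, 0 < 1 + g x / τ := by
    have h := (tendsto_zero_of_tendsto_mul_atTop hxw).const_add 1
    rw [add_zero] at h
    exact h.eventually_const_lt one_pos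
  refine ((tendsto_mul_log_one_add_of_tendsto hxw).add_const (log τ)).congr' ?_
  filter_upwards [hw] with x hx
  have hsplit : τ + g x = τ * (1 + g x / τ) := by field_simp
  show _ = x * log (τ + g x) - (x - 1) * log τ
  rw [hsplit, log_mul hτ.ne' hx.ne']
  ring
end

section
/- Let α, τ, η, β be real numbers with α ≥ 0, α ≠ 1, τ > 0, η > 0, β > 0, and suppose β > (α−1)/(τ − τ^α·(τ + log(1+η))^(1−α)). Then τ^(−α)·(1 + β·τ − α)/(β·(1−α)) < (τ + log(1+η))^(1−α)/(1−α). (In other words, the limit of f at +∞ is strictly smaller than f(1).) -/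
/-! Put `D = τ - τ^α (τ + log(1+η))^(1-α)`. Multiplying out, the gap `f(1) - lim f` equals
`τ^(-α) (β D/(α-1) - 1)/β`. Since `τ = τ^α τ^(1-α)` and `x ↦ x^(1-α)` increases or
decreases with the sign of `1 - α`, the quotient `D/(α-1)` is positive, so the hypothesis
`β > (α-1)/D` is exactly `β D/(α-1) > 1`. -/

open Real

lemma rpow_sub_rpow_div_pos {a b p : ℝ} (ha : 0 < a) (hab : a < b) (hp : p ≠ 0) :
    0 < (b ^ p - a ^ p) / p := by
  rcases hp.lt_or_gt with hp | hp
  · exact div_pos_of_neg_of_neg (sub_neg.mpr (rpow_lt_rpow_of_neg ha hab hp)) hp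
  · exact div_pos (sub_pos.mpr (rpow_lt_rpow ha.le hab hp)) hp

lemma sub_rpow_mul_rpow_one_sub_div_pos {a b α : ℝ} (ha : 0 < a) (hab : a < b) (hα : α ≠ 1) :
    0 < (a - a ^ α * b ^ (1 - α)) / (α - 1) := by
  have hsplit : a = a ^ α * a ^ (1 - α) := by
    rw [← rpow_add ha, add_sub_cancel, rpow_one]
  have hp : 1 - α ≠ 0 := sub_ne_zero.mpr hα.symm
  have hrw : (a - a ^ α * b ^ (1 - α)) / (α - 1)
      = a ^ α * ((b ^ (1 - α) - a ^ (1 - α)) / (1 - α)) := by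
    nth_rewrite 1 [hsplit]
    field_simp [hp, sub_ne_zero.mpr hα]
    ring
  rw [hrw]
  exact mul_pos (rpow_pos_of_pos ha α) (rpow_sub_rpow_div_pos ha hab hp)

theorem stmt_11_general (α τ η β : ℝ) (hα1 : α ≠ 1)
    (hτ : 0 < τ) (hη : 0 < η) (hβ : 0 < β)
    (hβ' : β > (α - 1) / (τ - τ ^ α * (τ + Real.log (1 + η)) ^ (1 - α))) :
    τ ^ (-α) * (1 + β * τ - α) / (β * (1 - α))
      < (τ + Real.log (1 + η)) ^ (1 - α) / (1 - α) := by
  set s := τ + Real.log (1 + η)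
  set c := (τ - τ ^ α * s ^ (1 - α)) / (α - 1)
  have hτs : τ < s := lt_add_of_pos_right τ (log_pos (by linarith))
  have hc : 0 < c := sub_rpow_mul_rpow_one_sub_div_pos hτ hτs hα1
  have hβc : 1 < β * c := by
    rw [gt_iff_lt, ← inv_div] at hβ'
    exact (inv_lt_iff_one_lt_mul₀ hc).mp hβ'
  have hgap : s ^ (1 - α) / (1 - α) - τ ^ (-α) * (1 + β * τ - α) / (β * (1 - α))
      = τ ^ (-α) * (β * c - 1) / β := by
    have hτα : τ ^ (-α) * τ ^ α = 1 := by rw [← rpow_add hτ, neg_add_cancel, rpow_zero]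
    simp only [c]
    field_simp [sub_ne_zero.mpr hα1, sub_ne_zero.mpr hα1.symm]
    linear_combination (β * (1 - α) * s ^ (1 - α)) * hτα
  have hgap_pos : 0 < τ ^ (-α) * (β * c - 1) / β :=
    div_pos (mul_pos (rpow_pos_of_pos hτ _) (by linarith)) hβ
  linarith

/-- if β > (α−1)/(τ − τ^α·(τ + log(1+η))^(1−α)), then the limit of f
at +∞, namely τ^(−α)·(1 + βτ − α)/(β(1−α)), is strictly smaller than
f(1) = (τ + log(1+η))^(1−α)/(1−α). -/
theorem stmt_11 (α τ η β : ℝ) (hα0 : 0 ≤ α) (hα1 : α ≠ 1)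
    (hτ : 0 < τ) (hη : 0 < η) (hβ : 0 < β)
    (hβ' : β > (α - 1) / (τ - τ ^ α * (τ + Real.log (1 + η)) ^ (1 - α))) :
    τ ^ (-α) * (1 + β * τ - α) / (β * (1 - α))
      < (τ + Real.log (1 + η)) ^ (1 - α) / (1 - α) :=
  stmt_11_general α τ η β hα1 hτ hη hβ hβ'
end
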